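/- Let G be a simple undirected graph, v a degree-1 vertex whose unique neighbor u has degree 2, and let w be the other neighbor of u. Then there exists a minimum 3-path vertex cover C of G with w ∈ C and u, v ∉ C. -/

import Mathlib

/-!
Take any minimum cover `D` and replace `D ∩ {u, v}` by `w`. Every 3-path meeting `u` or `v`
passes through `w`, so the result is still a cover; it is no larger than `D`, because either `D`
meets `{u, v}`, or `D` must already contain `w` to cover the path `v u w`.
-/

open Finset

variable {V : Type*}

def IsP3VC (G : SimpleGraph V) (C : Finset V) : Prop :=
  ∀ a b c : V, G.Adj a b → G.Adj b c → a ≠ c → a ∈ C ∨ b ∈ C ∨ c ∈ C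

def IsMinP3VC (G : SimpleGraph V) (C : Finset V) : Prop :=
  IsP3VC G C ∧ ∀ D : Finset V, IsP3VC G D → C.card ≤ D.card

namespace SimpleGraph

variable {G : SimpleGraph V} {u v w x : V}

lemma eq_of_adj_of_degree_eq_one [Fintype (G.neighborSet v)] (h : G.degree v = 1)
    (hu : G.Adj v u) (hx : G.Adj v x) : x = u :=
  (degree_eq_one_iff_existsUnique_adj.mp h).unique hx hu

lemma eq_or_eq_of_adj_of_degree_eq_two [Fintype (G.neighborSet u)] (h : G.degree u = 2)
    (hv : G.Adj u v) (hw : G.Adj u w) (hvw : v ≠ w) (hx : G.Adj u x) : x = v ∨ x = w := by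
  classical
  have hN : G.neighborFinset u = {v, w} :=
    (eq_of_subset_of_card_le (by simp [insert_subset_iff, hv, hw])
      (by rw [card_pair hvw, card_neighborFinset_eq_degree, h])).symm
  simpa [hN] using (mem_neighborFinset G u x).mpr hx

end SimpleGraph

lemma exists_isMinP3VC [Finite V] (G : SimpleGraph V) : ∃ C : Finset V, IsMinP3VC G C := by
  classical
  have : Fintype V := Fintype.ofFinite V
  obtain ⟨C, hC, hmin⟩ := exists_min_image (univ.filter (IsP3VC G)) card
    ⟨univ, by simp [IsP3VC]⟩
  exact ⟨C, by simpa using hC, fun D hD => hmin D (by simpa using hD)⟩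

section Tail

variable [DecidableEq V] {G : SimpleGraph V} {u v w : V}

lemma mem_of_path_meets_tail {a b c : V} (hv : ∀ x, G.Adj v x → x = u)
    (hu : ∀ x, G.Adj u x → x = v ∨ x = w) (hab : G.Adj a b) (hbc : G.Adj b c) (hac : a ≠ c)
    (hmeet : ¬Disjoint ({a, b, c} : Finset V) {u, v}) : w ∈ ({a, b, c} : Finset V) := by
  simp only [disjoint_insert_left, disjoint_insert_right, disjoint_singleton, not_and_or,
    not_not] at hmeet
  simp only [mem_insert, mem_singleton]
  grind [SimpleGraph.Adj.symm]

lemma IsP3VC.tail_exchange {D : Finset V} (hD : IsP3VC G D)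
    (hv : ∀ x, G.Adj v x → x = u) (hu : ∀ x, G.Adj u x → x = v ∨ x = w) :
    IsP3VC G (insert w (D \ {u, v})) := by
  intro a b c hab hbc hac
  by_cases hmeet : Disjoint ({a, b, c} : Finset V) {u, v}
  · have hout : ∀ x ∈ ({a, b, c} : Finset V), x ∉ ({u, v} : Finset V) :=
      fun x hx => disjoint_left.mp hmeet hx
    rcases hD a b c hab hbc hac with h | h | h <;> simp [h, hout]
  · have := mem_of_path_meets_tail hv hu hab hbc hac hmeet
    simp only [mem_insert, mem_singleton] at this
    rcases this with rfl | rfl | rfl <;> simp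

lemma IsP3VC.card_tail_exchange_le {D : Finset V} (hD : IsP3VC G D)
    (hvu : G.Adj v u) (huw : G.Adj u w) (hwv : w ≠ v) :
    (insert w (D \ {u, v})).card ≤ D.card := by
  by_cases huv : u ∈ D ∨ v ∈ D
  · obtain ⟨y, hyD, hy⟩ : ∃ y ∈ D, y = u ∨ y = v := by grind
    calc (insert w (D \ {u, v})).card ≤ (D \ {u, v}).card + 1 := card_insert_le _ _
      _ ≤ (D.erase y).card + 1 := by gcongr; intro x; grind
      _ = D.card := card_erase_add_one hyD
  · rw [not_or] at huv
    have hwD : w ∈ D := by grind [hD v u w hvu huw hwv.symm]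
    rw [sdiff_eq_self_of_disjoint (by simp [huv]), insert_eq_of_mem hwD]

end Tail

/-- for a tail `v` (degree-1) with degree-2 neighbor `u` whose
other neighbor is `w`, there is a minimum 3-path vertex cover containing `w`
and avoiding `u` and `v`. -/
theorem stmt3 [Fintype V] [DecidableEq V] (G : SimpleGraph V) [DecidableRel G.Adj]
    (v u w : V)
    (hdegv : G.degree v = 1) (hvu : G.Adj v u)
    (hdegu : G.degree u = 2) (huw : G.Adj u w) (hwv : w ≠ v) :
    ∃ C : Finset V, IsMinP3VC G C ∧ w ∈ C ∧ u ∉ C ∧ v ∉ C := by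
  obtain ⟨D, hD, hDmin⟩ := exists_isMinP3VC G
  have hv (x : V) : G.Adj v x → x = u := G.eq_of_adj_of_degree_eq_one hdegv hvu
  have hu (x : V) : G.Adj u x → x = v ∨ x = w :=
    G.eq_or_eq_of_adj_of_degree_eq_two hdegu hvu.symm huw hwv.symm
  refine ⟨insert w (D \ {u, v}), ⟨hD.tail_exchange hv hu, fun E hE => ?_⟩,
    mem_insert_self _ _, ?_, ?_⟩
  · exact (hD.card_tail_exchange_le hvu huw hwv).trans (hDmin E hE)
  all_goals simp [G.ne_of_adj huw, hwv.symm]
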